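/- arXiv:2203.12401 — 2 statements merged into one kernel-verified Lean document; each statement's English description precedes it below -/
import Mathlib

section
/- Let f(X) = a₀X⁴ + 4a₁X³ + 6a₂X² + 4a₃X + a₄ be a real quartic polynomial and let ξ₁ be a real root of f, i.e. f(ξ₁) = 0. Let ξ₀ and ξ be real numbers distinct from ξ₁ and from each other, with f(ξ₀) ≥ 0 and f(ξ) ≥ 0. Define P₁ = f'(ξ₁)/(4(ξ₀−ξ₁)) + f''(ξ₁)/24, P₂ = f'(ξ₁)/(4(ξ−ξ₁)) + f''(ξ₁)/24, Q₁ = −f'(ξ₁)·√(f(ξ₀))/(4(ξ₀−ξ₁)²), Q₂ = −f'(ξ₁)·√(f(ξ))/(4(ξ−ξ₁)²). If P₁ ≠ P₂, then (1/4)·((Q₁ + Q₂)/(P₁ − P₂))² − P₁ − P₂ = (√(f(ξ)·f(ξ₀)) + f(ξ₀))/(2(ξ−ξ₀)²) + f'(ξ₀)/(4(ξ−ξ₀)) + f''(ξ₀)/24. -/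
/-!
Put `u = ξ₀ - ξ₁`, `v = ξ - ξ₁`. The common factor `f'(ξ₁)` cancels from `(Q₁ + Q₂) / (P₁ - P₂)`,
leaving `-(√f(ξ₀) v² + √f(ξ) u²) / (u v (v - u))`. Squaring it produces the cross term
`2 √f(ξ₀) √f(ξ) u² v²`, which is exactly the radical on the right-hand side; what remains is a
polynomial identity in `ξ₀, ξ, ξ₁` that holds modulo `f(ξ₁) = 0`.
-/

section
variable {K : Type*}

def quartic [CommRing K] (a₀ a₁ a₂ a₃ a₄ X : K) : K :=
  a₀ * X ^ 4 + 4 * a₁ * X ^ 3 + 6 * a₂ * X ^ 2 + 4 * a₃ * X + a₄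

def quarticDeriv [CommRing K] (a₀ a₁ a₂ a₃ X : K) : K :=
  4 * a₀ * X ^ 3 + 12 * a₁ * X ^ 2 + 12 * a₂ * X + 4 * a₃

def quarticDeriv2 [CommRing K] (a₀ a₁ a₂ X : K) : K :=
  12 * a₀ * X ^ 2 + 24 * a₁ * X + 12 * a₂

/-- Eq. (48) with the radicals cancelled and the denominators cleared. -/
theorem quartic_cleared_identity_of_root [CommRing K] {a₀ a₁ a₂ a₃ a₄ ξ₁ : K}
    (hroot : quartic a₀ a₁ a₂ a₃ a₄ ξ₁ = 0) (ξ₀ ξ : K) :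
    6 * quartic a₀ a₁ a₂ a₃ a₄ ξ₀ * ((ξ - ξ₁) ^ 4 - 2 * (ξ₀ - ξ₁) ^ 2 * (ξ - ξ₁) ^ 2)
        + 6 * quartic a₀ a₁ a₂ a₃ a₄ ξ * (ξ₀ - ξ₁) ^ 4
      = (ξ₀ - ξ₁) ^ 2 * (ξ - ξ₁) ^ 2 * (ξ - ξ₀) * (6 * quarticDeriv a₀ a₁ a₂ a₃ ξ₀
          + (quarticDeriv2 a₀ a₁ a₂ ξ₀ + 2 * quarticDeriv2 a₀ a₁ a₂ ξ₁) * (ξ - ξ₀))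
        + 6 * quarticDeriv a₀ a₁ a₂ a₃ ξ₁ * (ξ₀ - ξ₁) * (ξ - ξ₁) * (ξ - ξ₀) ^ 2
          * (ξ₀ + ξ - 2 * ξ₁) := by
  unfold quartic quarticDeriv quarticDeriv2 at *
  linear_combination (6 * ((ξ - ξ₁) ^ 2 - (ξ₀ - ξ₁) ^ 2) ^ 2) * hroot

theorem turning_point_ratio_eq [Field K] [CharZero K] {A c s₀ s u v : K}
    (hA : A ≠ 0) (hu : u ≠ 0) (hv : v ≠ 0) (huv : v - u ≠ 0) :
    (-A * s₀ / (4 * u ^ 2) + -A * s / (4 * v ^ 2)) / (A / (4 * u) + c - (A / (4 * v) + c))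
      = -(s₀ * v ^ 2 + s * u ^ 2) / (u * v * (v - u)) := by
  have hden : A / (4 * u) + c - (A / (4 * v) + c) = A * (v - u) / (4 * u * v) := by
    field_simp
    ring
  rw [hden]
  field_simp
  ring

theorem quartic_addition_identity_of_root [Field K] [CharZero K]
    {a₀ a₁ a₂ a₃ a₄ ξ₁ ξ₀ ξ s₀ s : K}
    (hroot : quartic a₀ a₁ a₂ a₃ a₄ ξ₁ = 0) (hA : quarticDeriv a₀ a₁ a₂ a₃ ξ₁ ≠ 0)
    (h₀₁ : ξ₀ ≠ ξ₁) (h₁ : ξ ≠ ξ₁) (h₀ : ξ ≠ ξ₀)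
    (hs₀ : s₀ ^ 2 = quartic a₀ a₁ a₂ a₃ a₄ ξ₀) (hs : s ^ 2 = quartic a₀ a₁ a₂ a₃ a₄ ξ) :
    let A := quarticDeriv a₀ a₁ a₂ a₃ ξ₁
    let B := quarticDeriv2 a₀ a₁ a₂ ξ₁
    (1 / 4) * ((-A * s₀ / (4 * (ξ₀ - ξ₁) ^ 2) + -A * s / (4 * (ξ - ξ₁) ^ 2))
        / (A / (4 * (ξ₀ - ξ₁)) + B / 24 - (A / (4 * (ξ - ξ₁)) + B / 24))) ^ 2
      - (A / (4 * (ξ₀ - ξ₁)) + B / 24) - (A / (4 * (ξ - ξ₁)) + B / 24)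
      = (s * s₀ + quartic a₀ a₁ a₂ a₃ a₄ ξ₀) / (2 * (ξ - ξ₀) ^ 2)
        + quarticDeriv a₀ a₁ a₂ a₃ ξ₀ / (4 * (ξ - ξ₀)) + quarticDeriv2 a₀ a₁ a₂ ξ₀ / 24 := by
  intro A B
  have hu : ξ₀ - ξ₁ ≠ 0 := sub_ne_zero.mpr h₀₁
  have hv : ξ - ξ₁ ≠ 0 := sub_ne_zero.mpr h₁
  have hw : ξ - ξ₀ ≠ 0 := sub_ne_zero.mpr h₀
  have hvu : (ξ - ξ₁) - (ξ₀ - ξ₁) = ξ - ξ₀ := by ring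
  rw [turning_point_ratio_eq hA hu hv (hvu ▸ hw), hvu]
  field_simp
  linear_combination (48 * (ξ - ξ₁) ^ 4) * hs₀ + (48 * (ξ₀ - ξ₁) ^ 4) * hs
    + 8 * quartic_cleared_identity_of_root hroot ξ₀ ξ

end

/-- The addition-theorem identity (Eq. (48) of the paper) showing that the single
Biermann–Weierstrass formula remains valid across a turning point `ξ₁`. -/
theorem turning_point_addition_identity
    (a₀ a₁ a₂ a₃ a₄ : ℝ)
    (f f' f'' : ℝ → ℝ)
    (hf : f = fun X => a₀ * X ^ 4 + 4 * a₁ * X ^ 3 + 6 * a₂ * X ^ 2 + 4 * a₃ * X + a₄)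
    (hf' : f' = fun X => 4 * a₀ * X ^ 3 + 12 * a₁ * X ^ 2 + 12 * a₂ * X + 4 * a₃)
    (hf'' : f'' = fun X => 12 * a₀ * X ^ 2 + 24 * a₁ * X + 12 * a₂)
    (ξ₁ : ℝ) (hroot : f ξ₁ = 0)
    (ξ₀ ξ : ℝ) (h₀₁ : ξ₀ ≠ ξ₁) (h₁ : ξ ≠ ξ₁) (h₀ : ξ ≠ ξ₀)
    (hfξ₀ : 0 ≤ f ξ₀) (hfξ : 0 ≤ f ξ)
    (P₁ P₂ Q₁ Q₂ : ℝ)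
    (hP₁ : P₁ = f' ξ₁ / (4 * (ξ₀ - ξ₁)) + f'' ξ₁ / 24)
    (hP₂ : P₂ = f' ξ₁ / (4 * (ξ - ξ₁)) + f'' ξ₁ / 24)
    (hQ₁ : Q₁ = -f' ξ₁ * Real.sqrt (f ξ₀) / (4 * (ξ₀ - ξ₁) ^ 2))
    (hQ₂ : Q₂ = -f' ξ₁ * Real.sqrt (f ξ) / (4 * (ξ - ξ₁) ^ 2))
    (hPP : P₁ ≠ P₂) :
    (1 / 4) * ((Q₁ + Q₂) / (P₁ - P₂)) ^ 2 - P₁ - P₂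
      = (Real.sqrt (f ξ * f ξ₀) + f ξ₀) / (2 * (ξ - ξ₀) ^ 2)
        + f' ξ₀ / (4 * (ξ - ξ₀)) + f'' ξ₀ / 24 := by
  have hA : f' ξ₁ ≠ 0 := by
    rintro h
    exact hPP (by simp [hP₁, hP₂, h])
  subst hf hf' hf'' hP₁ hP₂ hQ₁ hQ₂
  rw [Real.sqrt_mul hfξ]
  exact quartic_addition_identity_of_root hroot hA h₀₁ h₁ h₀ (Real.sq_sqrt hfξ₀) (Real.sq_sqrt hfξ)
end

section
/- Let λ > 0 with λ² > 12, let ξ_max = (λ²/2)·(1 − √(1 − 12/λ²)), and let U_λ(ξ) = (1 − 2/ξ)·(1 + λ²/ξ²). Then U_λ(ξ_max) ≥ 1 if and only if λ² ≥ 16. -/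
/-!
At any critical point `ξ` of `U_λ` one has `ξ² = λ² (ξ - 3)`, so `λ²/ξ² = 1/(ξ - 3)` and
`U_λ(ξ) - 1 = (4 - ξ) / (ξ (ξ - 3))`; hence `U_λ(ξ_max) ≥ 1` exactly when `ξ_max ≤ 4`.
With `s = √(1 - 12/λ²)` one has `ξ_max (1 + s) = 6`, so `ξ_max ≤ 4` means `s ≥ 1/2`,
i.e. `λ² ≥ 16`.
-/

open Real

noncomputable def effPotential (L ξ : ℝ) : ℝ := (1 - 2 / ξ) * (1 + L / ξ ^ 2)

noncomputable def potentialMax (L : ℝ) : ℝ := L / 2 * (1 - √(1 - 12 / L))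

theorem one_le_effPotential_iff {L ξ : ℝ} (hL : 0 < L) (hξ : ξ ^ 2 = L * (ξ - 3)) :
    1 ≤ effPotential L ξ ↔ ξ ≤ 4 := by
  have hξ0 : ξ ≠ 0 := by
    rintro rfl
    linarith
  have hξ3 : 0 < ξ - 3 := by
    have : 0 < L * (ξ - 3) := hξ ▸ by positivity
    exact pos_of_mul_pos_right this hL.le
  have hU : effPotential L ξ - 1 = (4 - ξ) / (ξ * (ξ - 3)) := by
    have hLξ : L / ξ ^ 2 = 1 / (ξ - 3) := by
      rw [div_eq_div_iff (pow_ne_zero 2 hξ0) hξ3.ne', hξ]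
      ring
    rw [effPotential, hLξ]
    field_simp
    ring
  have hden : 0 < ξ * (ξ - 3) := mul_pos (by linarith) hξ3
  rw [← sub_nonneg, hU, le_div_iff₀ hden, zero_mul, sub_nonneg]

section potentialMax

variable {L : ℝ} (hL : 12 ≤ L)
include hL

theorem mul_sq_sqrt_one_sub_twelve_div : L * √(1 - 12 / L) ^ 2 = L - 12 := by
  have hL0 : 0 < L := by linarith
  rw [sq_sqrt (by rw [sub_nonneg, div_le_one hL0]; exact hL)]
  field_simp

theorem potentialMax_mul_one_add_sqrt : potentialMax L * (1 + √(1 - 12 / L)) = 6 := by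
  rw [potentialMax]
  linear_combination (-1 / 2 : ℝ) * mul_sq_sqrt_one_sub_twelve_div hL

theorem potentialMax_sq : potentialMax L ^ 2 = L * (potentialMax L - 3) := by
  rw [potentialMax]
  linear_combination L / 4 * mul_sq_sqrt_one_sub_twelve_div hL

theorem potentialMax_le_four_iff : potentialMax L ≤ 4 ↔ 16 ≤ L := by
  have hL0 : 0 < L := by linarith
  have hs : 0 < 1 + √(1 - 12 / L) := by positivity
  calc potentialMax L ≤ 4
      ↔ potentialMax L * (1 + √(1 - 12 / L)) ≤ 4 * (1 + √(1 - 12 / L)) :=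
        (mul_le_mul_iff_left₀ hs).symm
    _ ↔ 1 / 2 ≤ √(1 - 12 / L) := by
        rw [potentialMax_mul_one_add_sqrt hL]
        constructor <;> intro h <;> linarith
    _ ↔ (1 / 2) ^ 2 ≤ 1 - 12 / L := le_sqrt' (by norm_num)
    _ ↔ 16 ≤ L := by
        rw [le_sub_comm, div_le_iff₀ hL0]
        constructor <;> intro h <;> linarith

end potentialMax

theorem potential_max_ge_one_iff_general
    (lam : ℝ) (hlam2 : 12 < lam ^ 2)
    (ξmax : ℝ) (hξmax : ξmax = lam ^ 2 / 2 * (1 - Real.sqrt (1 - 12 / lam ^ 2)))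
    (U : ℝ → ℝ) (hU : U = fun ξ => (1 - 2 / ξ) * (1 + lam ^ 2 / ξ ^ 2)) :
    1 ≤ U ξmax ↔ 16 ≤ lam ^ 2 := by
  subst hξmax hU
  rw [← potentialMax_le_four_iff hlam2.le]
  exact one_le_effPotential_iff (by linarith) (potentialMax_sq hlam2.le)

/-- The value of the timelike effective potential at its local maximum satisfies
`U_λ(ξ_max) ≥ 1` if and only if `λ² ≥ 16`. -/
theorem potential_max_ge_one_iff
    (lam : ℝ) (hlam : 0 < lam) (hlam2 : 12 < lam ^ 2)
    (ξmax : ℝ) (hξmax : ξmax = lam ^ 2 / 2 * (1 - Real.sqrt (1 - 12 / lam ^ 2)))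
    (U : ℝ → ℝ) (hU : U = fun ξ => (1 - 2 / ξ) * (1 + lam ^ 2 / ξ ^ 2)) :
    1 ≤ U ξmax ↔ 16 ≤ lam ^ 2 :=
  potential_max_ge_one_iff_general lam hlam2 ξmax hξmax U hU
end
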